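/- Let G be a group and T ≤ C subgroups of G with C ≤ C_G(T). Assume: (i) N_{C_G(T)}(C) = C; (ii) N_G(C) ≤ N_G(T); (iii) for every g ∈ N_G(T) there exists h ∈ C_G(T) such that (C^g)^h = C. Then N_G(T) = C_G(T)·N_G(C), and there is a group isomorphism N_G(C)/C ≅ N_G(T)/C_G(T). -/

import Mathlib

open Pointwise

/-- The conjugate `H^g = g⁻¹ * H * g` of a subgroup `H` by an element `g`. -/
def conjSub {G : Type*} [Group G] (H : Subgroup G) (g : G) : Subgroup G :=
  H.map (MulAut.conj g⁻¹).toMonoidHom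

/-- The centralizer `C_G(T)` is a normal subgroup of the normalizer `N_G(T)`. -/
instance centralizer_subgroupOf_normalizer_normal {G : Type*} [Group G] (T : Subgroup G) :
    ((Subgroup.centralizer (T : Set G)).subgroupOf (Subgroup.normalizer (T : Set G))).Normal := by
  rw [← Subgroup.normalizerMonoidHom_ker]
  exact MonoidHom.normal_ker _

/-!
By (iii), each `g ∈ N_G(T)` can be corrected by an element of `C_G(T)` into `N_G(C)` (a Frattini
argument), so `N_G(T) = C_G(T)·N_G(C)`. By (ii), `N_G(C)` normalizes `C_G(T)`, so the second
isomorphism theorem gives `N_G(C)/(N_G(C) ∩ C_G(T)) ≅ N_G(T)/C_G(T)`, and (i) identifies the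
intersection with `C`.
-/

section conjSub

variable {G : Type*} [Group G]

lemma conjSub_conjSub (H : Subgroup G) (g h : G) :
    conjSub (conjSub H g) h = conjSub H (g * h) := by
  simp only [conjSub, Subgroup.map_map, mul_inv_rev, map_mul]
  rfl

lemma conjSub_eq_self_iff {H : Subgroup G} {g : G} :
    conjSub H g = H ↔ g ∈ Subgroup.normalizer (H : Set G) := by
  rw [← inv_mem_iff, Subgroup.mem_normalizer_iff_map_conj_eq]
  rfl

end conjSub

namespace Subgroup

variable {G : Type*} [Group G]

lemma normalizer_le_normalizer_centralizer (T : Subgroup G) :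
    normalizer (T : Set G) ≤ normalizer (centralizer (T : Set G) : Set G) :=
  le_normalizer_of_normal_subgroupOf (centralizer_le_normalizer _)

/-- **Frattini argument.** -/
lemma coe_eq_mul_normalizer_of_conjSub {K N C : Subgroup G} (hKN : K ≤ N)
    (hCN : normalizer (C : Set G) ≤ N)
    (hconj : ∀ g ∈ N, ∃ k ∈ K, conjSub (conjSub C g) k = C) :
    (N : Set G) = K * normalizer (C : Set G) := by
  ext x
  refine ⟨fun hx ↦ ?_, ?_⟩
  · obtain ⟨k, hk, hxk⟩ := hconj x⁻¹ (inv_mem hx)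
    rw [conjSub_conjSub, conjSub_eq_self_iff] at hxk
    exact ⟨k, hk, (x⁻¹ * k)⁻¹, inv_mem hxk, by group⟩
  · rintro ⟨k, hk, n, hn, rfl⟩
    exact mul_mem (hKN hk) (hCN hn)

lemma nonempty_quotient_mulEquiv_of_sup_eq {M K L N : Subgroup G}
    (hM : M ≤ normalizer (K : Set G)) (hL : M ⊓ K = L) (hN : M ⊔ K = N)
    [(L.subgroupOf M).Normal] [(K.subgroupOf N).Normal] :
    Nonempty (M ⧸ L.subgroupOf M ≃* N ⧸ K.subgroupOf N) := by
  subst hL hN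
  have := normal_subgroupOf_of_le_normalizer hM
  exact ⟨(QuotientGroup.quotientMulEquivOfEq (inf_subgroupOf_left K M)).trans
    (QuotientGroup.quotientInfEquivProdNormalizerQuotient M K hM)⟩

end Subgroup

theorem weyl_group_via_carter_general {G : Type*} [Group G] (T C : Subgroup G)
    (h1 : (Subgroup.normalizer (C : Set G)) ⊓ Subgroup.centralizer (T : Set G) = C)
    (h2 : (Subgroup.normalizer (C : Set G)) ≤ (Subgroup.normalizer (T : Set G)))
    (h3 : ∀ g ∈ (Subgroup.normalizer (T : Set G)), ∃ h ∈ Subgroup.centralizer (T : Set G),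
        conjSub (conjSub C g) h = C) :
    (Subgroup.normalizer (T : Set G) : Set G) =
        (Subgroup.centralizer (T : Set G) : Set G) * (Subgroup.normalizer (C : Set G) : Set G) ∧
      Nonempty ((↥(Subgroup.normalizer (C : Set G)) ⧸ C.subgroupOf (Subgroup.normalizer (C : Set G))) ≃*
        (↥(Subgroup.normalizer (T : Set G)) ⧸ (Subgroup.centralizer (T : Set G)).subgroupOf (Subgroup.normalizer (T : Set G)))) := by
  open Subgroup in
  have hCT : normalizer (C : Set G) ≤ normalizer (centralizer (T : Set G) : Set G) :=
    h2.trans (normalizer_le_normalizer_centralizer T)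
  have hdecomp := coe_eq_mul_normalizer_of_conjSub (centralizer_le_normalizer (T : Set G)) h2 h3
  have hsup : normalizer (C : Set G) ⊔ centralizer (T : Set G) = normalizer (T : Set G) := by
    rw [sup_comm]
    exact SetLike.coe_injective ((coe_mul_of_right_le_normalizer_left _ _ hCT).trans hdecomp.symm)
  exact ⟨hdecomp, nonempty_quotient_mulEquiv_of_sup_eq hCT h1 hsup⟩

/-- Let `T ≤ C` be subgroups of a group `G` with `C ≤ C_G(T)`.  Assume
(i) `N_{C_G(T)}(C) = C`; (ii) `N_G(C) ≤ N_G(T)`; (iii) every `N_G(T)`-conjugate of `C`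
is `C_G(T)`-conjugate to `C`.  Then `N_G(T) = C_G(T)·N_G(C)`, and there is a group
isomorphism `N_G(C)/C ≅ N_G(T)/C_G(T)`. -/
theorem weyl_group_via_carter {G : Type*} [Group G] (T C : Subgroup G)
    (hTC : T ≤ C)
    (hCcent : C ≤ Subgroup.centralizer (T : Set G))
    (h1 : (Subgroup.normalizer (C : Set G)) ⊓ Subgroup.centralizer (T : Set G) = C)
    (h2 : (Subgroup.normalizer (C : Set G)) ≤ (Subgroup.normalizer (T : Set G)))
    (h3 : ∀ g ∈ (Subgroup.normalizer (T : Set G)), ∃ h ∈ Subgroup.centralizer (T : Set G),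
        conjSub (conjSub C g) h = C) :
    (Subgroup.normalizer (T : Set G) : Set G) =
        (Subgroup.centralizer (T : Set G) : Set G) * (Subgroup.normalizer (C : Set G) : Set G) ∧
      Nonempty ((↥(Subgroup.normalizer (C : Set G)) ⧸ C.subgroupOf (Subgroup.normalizer (C : Set G))) ≃*
        (↥(Subgroup.normalizer (T : Set G)) ⧸ (Subgroup.centralizer (T : Set G)).subgroupOf (Subgroup.normalizer (T : Set G)))) :=
  weyl_group_via_carter_general T C h1 h2 h3
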